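/- arXiv:0706.1704 — 7 statements merged into one kernel-verified Lean document; each statement's English description precedes it below -/
import Mathlib

section
/- (Lifting Lemma) Let A, B ∈ Rel(Δ), let f: A → B be a homomorphism, and let B' ∈ Rel^cov(Δ,Δ') be a lift of B (i.e. Φ(B') = B). Then there exists a lift A' ∈ Rel^cov(Δ,Δ') of A (i.e. Φ(A') = A) such that the same map f is a homomorphism A' → B' of structures of type Δ ∪ Δ'. -/
/-- A finite relational structure of signature `σ`, where symbol `s : σ` has arity `ar s`.
`rel s` is the set of `ar s`-tuples (written as functions `Fin (ar s) → carrier`)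
that are in the relation `s`. -/
structure RStruct (σ : Type) (ar : σ → ℕ) : Type 1 where
  carrier : Type
  fin : Finite carrier
  rel : ∀ s : σ, Set (Fin (ar s) → carrier)

namespace RStruct

variable {σ σ' : Type} {ar : σ → ℕ} {ar' : σ' → ℕ}

/-- `f` is a homomorphism from `A` to `B`. -/
def IsHom (A B : RStruct σ ar) (f : A.carrier → B.carrier) : Prop :=
  ∀ s : σ, ∀ t ∈ A.rel s, (f ∘ t) ∈ B.rel s

/-- There exists a homomorphism `A → B`. -/
def Hom (A B : RStruct σ ar) : Prop := ∃ f, IsHom A B f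

/-- Homomorphic equivalence. -/
def HomEquiv (A B : RStruct σ ar) : Prop := Hom A B ∧ Hom B A

/-- `Forb F` : structures admitting no homomorphism from any member of `F`. -/
def Forb (F : Set (RStruct σ ar)) : Set (RStruct σ ar) :=
  {A | ∀ F0 ∈ F, ¬ Hom F0 A}

/-- `CSP D` : structures admitting a homomorphism to some member of `D`. -/
def CSP (D : Set (RStruct σ ar)) : Set (RStruct σ ar) :=
  {A | ∃ D0 ∈ D, Hom A D0}

/-- `A` has a cycle of length `n`: either (degenerate case `n = 1`) a relational tuple with
a repeated coordinate, or (`n ≥ 2`) pairwise distinct elements `x 0, …, x (n-1)` and pairwise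
distinct relational tuples `r 0, …, r (n-1)` such that `r i` contains both `x i` and `x (i+1)`
(indices cyclically, `x n = x 0`). -/
def HasCycleOfLength (A : RStruct σ ar) (n : ℕ) : Prop :=
  (n = 1 ∧ ∃ s : σ, ∃ t ∈ A.rel s, ¬ Function.Injective t) ∨
  (2 ≤ n ∧ ∃ x : ℕ → A.carrier, ∃ r : ℕ → Σ s : σ, Fin (ar s) → A.carrier,
    x n = x 0 ∧
    (∀ i < n, ∀ j < n, x i = x j → i = j) ∧
    (∀ i < n, ∀ j < n, r i = r j → i = j) ∧
    (∀ i < n, (r i).2 ∈ A.rel (r i).1 ∧ (∃ j, (r i).2 j = x i) ∧ (∃ j, (r i).2 j = x (i + 1))))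

def HasCycle (A : RStruct σ ar) : Prop := ∃ n, A.HasCycleOfLength n

/-- A forest is a structure with no cycle. -/
def IsForest (A : RStruct σ ar) : Prop := ¬ A.HasCycle

/-- The shadow (forgetful functor `Φ`) of a structure of the lifted signature `σ ⊕ σ'`:
forget the `σ'`-relations. -/
def shadow (A' : RStruct (σ ⊕ σ') (Sum.elim ar ar')) : RStruct σ ar :=
  ⟨A'.carrier, A'.fin, fun s => A'.rel (Sum.inl s)⟩

/-- The covering condition for lifted structures in which all symbols of `σ'` have the
common arity `r`: every `r`-tuple lies in some `σ'`-relation. -/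
def Covers (r : ℕ) (A' : RStruct (σ ⊕ σ') (Sum.elim ar fun _ => r)) : Prop :=
  ∀ t : Fin r → A'.carrier, ∃ s' : σ', t ∈ A'.rel (Sum.inr s')

end RStruct

namespace RStruct

/-- The lift of `A` obtained by adding the `σ'`-relations `rel'` (all of arity `r`). -/
def liftWith {σ σ' : Type} {ar : σ → ℕ} {r : ℕ} (A : RStruct σ ar)
    (rel' : σ' → Set (Fin r → A.carrier)) :
    RStruct (σ ⊕ σ') (Sum.elim ar fun _ => r) where
  carrier := A.carrier
  fin := A.fin
  rel := fun s => match s with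
    | Sum.inl s => A.rel s
    | Sum.inr s' => rel' s'

end RStruct

open RStruct

/-- Lifting Lemma: if `f : A → Φ(B')` is a homomorphism and `B'` is a covering
lift of `B = Φ(B')`, then `A` has a covering lift `A'` (with `Φ(A') = A`) such that the same
map `f` is a homomorphism `A' → B'` of the lifted signature. -/
theorem lifting_lemma {σ σ' : Type} {ar : σ → ℕ} {r : ℕ}
    (A : RStruct σ ar) (B' : RStruct (σ ⊕ σ') (Sum.elim ar fun _ => r))
    (hB' : Covers r B')
    (f : A.carrier → B'.carrier) (hf : IsHom A (shadow B') f) :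
    ∃ rel' : σ' → Set (Fin r → A.carrier),
      Covers r (liftWith A rel') ∧
      shadow (liftWith A rel') = A ∧
      IsHom (liftWith A rel') B' f := by
  refine ⟨fun s' => {t | (f ∘ t) ∈ B'.rel (Sum.inr s')}, ?_, rfl, ?_⟩
  · intro t
    exact hB' (f ∘ t)
  · intro s t ht
    cases s with
    | inl s => exact hf s t ht
    | inr s' => exact ht
end

section
/- Let F' be a finite set of structures in Rel^cov(Δ,Δ') and suppose there exists a finite set D' of structures in Rel^cov(Δ,Δ') such that (F', D') is a finite duality in Rel^cov(Δ,Δ'). Then the shadow Φ(Forb(F')) equals CSP(Φ(D')). Explicitly: for every A ∈ Rel(Δ), there exists a lift A' ∈ Rel^cov(Δ,Δ') of A such that F' does not map homomorphically to A' for any F' ∈ F', if and only if there is a homomorphism A → Φ(D') for some D' ∈ D'. -/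
open RStruct

/-- if `(F', D')` is a finite duality in the covering category
`Rel^cov(Δ,Δ')`, then the shadow of `Forb F'` equals `CSP (Φ(D'))`: a structure `A` has
a covering lift avoiding all of `F'` iff `A` maps homomorphically to the shadow of
some member of `D'`. -/
theorem shadow_of_duality {σ σ' : Type} [Finite σ] [Finite σ'] {ar : σ → ℕ} {r : ℕ}
    (F' D' : Set (RStruct (σ ⊕ σ') (Sum.elim ar fun _ => r)))
    (hF'fin : F'.Finite) (hD'fin : D'.Finite)
    (hF'cov : ∀ F0 ∈ F', Covers r F0) (hD'cov : ∀ D0 ∈ D', Covers r D0)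
    (hdual : ∀ A' : RStruct (σ ⊕ σ') (Sum.elim ar fun _ => r), Covers r A' →
      ((∀ F0 ∈ F', ¬ Hom F0 A') ↔ ∃ D0 ∈ D', Hom A' D0)) :
    ∀ A : RStruct σ ar,
      (∃ A' : RStruct (σ ⊕ σ') (Sum.elim ar fun _ => r),
        Covers r A' ∧ shadow A' = A ∧ ∀ F0 ∈ F', ¬ Hom F0 A') ↔
      (∃ D0 ∈ D', Hom A (shadow D0)) := by
  intro A
  constructor
  · rintro ⟨A', hAcov, rfl, hforb⟩
    obtain ⟨D0, hD0, f, hf⟩ := (hdual A' hAcov).mp hforb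
    exact ⟨D0, hD0, f, fun s t ht => hf (Sum.inl s) t ht⟩
  · rintro ⟨D0, hD0, f, hf⟩
    refine ⟨⟨A.carrier, A.fin, fun s => Sum.rec (fun s => A.rel s)
      (fun s' => {t | (f ∘ t) ∈ D0.rel (Sum.inr s')}) s⟩, ?_, ?_, ?_⟩
    · intro t
      exact hD'cov D0 hD0 (f ∘ t)
    · rfl
    · intro F0 hF0 ⟨g, hg⟩
      have hfhom : IsHom ⟨A.carrier, A.fin, fun s => Sum.rec (fun s => A.rel s)
          (fun s' => {t | (f ∘ t) ∈ D0.rel (Sum.inr s')}) s⟩ D0 f := by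
        rintro (s | s') t ht
        · exact hf s t ht
        · exact ht
      have : Hom F0 D0 := ⟨f ∘ g, fun s t ht => hfhom s (g ∘ t) (hg s t ht)⟩
      exact ((hdual D0 (hD'cov D0 hD0)).mpr ⟨D0, hD0, id, fun s t ht => ht⟩) F0 hF0 this
end

section
/- Let F' and G' be finite sets of structures in Rel(Δ,Δ'). Define H' = { F' ⊔ G' : F' ∈ F', G' ∈ G' }, where F' ⊔ G' denotes the disjoint union of the structures F' and G'. Then Φ(Forb(F')) ∪ Φ(Forb(G')) = Φ(Forb(H')); in particular, the class of languages of the form Φ(Forb(F')) for finite F' (with fixed Δ and varying Δ') is closed under finite unions. -/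
namespace RStruct

/-- Disjoint union of two structures: the universe is the disjoint union of the universes and
each relation is the union of the corresponding relations. -/
def disjUnion {τ : Type} {arτ : τ → ℕ} (A B : RStruct τ arτ) : RStruct τ arτ where
  carrier := A.carrier ⊕ B.carrier
  fin := by have := A.fin; have := B.fin; infer_instance
  rel := fun s => (fun t => Sum.inl ∘ t) '' A.rel s ∪ (fun t => Sum.inr ∘ t) '' B.rel s

end RStruct

open RStruct

/-- with `H' = { F ⊔ G : F ∈ F', G ∈ G' }` (disjoint unions), the union of the
shadow languages of `Forb F'` and `Forb G'` is exactly the shadow language of `Forb H'`;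
in particular languages of the form `Φ(Forb F')` are closed under finite unions. -/
theorem shadow_forb_union {σ σ' : Type} {ar : σ → ℕ} {ar' : σ' → ℕ}
    (F' G' : Set (RStruct (σ ⊕ σ') (Sum.elim ar ar')))
    (hF' : F'.Finite) (hG' : G'.Finite) :
    {A : RStruct σ ar | ∃ A' ∈ Forb F', shadow A' = A} ∪
      {A : RStruct σ ar | ∃ A' ∈ Forb G', shadow A' = A} =
    {A : RStruct σ ar | ∃ A' ∈ Forb (Set.image2 disjUnion F' G'), shadow A' = A} := by
  ext A
  constructor
  · rintro (⟨A', hA', rfl⟩ | ⟨A', hA', rfl⟩) <;>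
    · refine ⟨A', ?_, rfl⟩
      rintro H ⟨F, hF, G, hG, rfl⟩ ⟨f, hf⟩
      first
      | exact hA' F hF ⟨f ∘ Sum.inl, fun s t ht => hf s _ (Or.inl ⟨t, ht, rfl⟩)⟩
      | exact hA' G hG ⟨f ∘ Sum.inr, fun s t ht => hf s _ (Or.inr ⟨t, ht, rfl⟩)⟩
  · rintro ⟨A', hA', rfl⟩
    by_cases h : A' ∈ Forb F'
    · exact Or.inl ⟨A', h, rfl⟩
    · refine Or.inr ⟨A', ?_, rfl⟩
      simp only [Forb, Set.mem_setOf_eq, not_forall] at h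
      obtain ⟨F, hF, hhom⟩ := h
      rw [not_not] at hhom
      obtain ⟨f, hf⟩ := hhom
      rintro G hG ⟨g, hg⟩
      refine hA' (disjUnion F G) ⟨F, hF, G, hG, rfl⟩ ⟨Sum.elim f g, ?_⟩
      rintro s t (⟨u, hu, rfl⟩ | ⟨u, hu, rfl⟩)
      · exact hf s u hu
      · exact hg s u hu
end

section
/- Every language in SNP can be described by a primitive SNP sentence: for every SNP sentence φ over input signature Δ with existential signature Π there exists a primitive SNP sentence ψ over Δ and Π such that every finite Δ-structure A satisfies φ if and only if it satisfies ψ. Moreover, if φ is monotone (respectively monadic, respectively without inequality) then ψ can be chosen monotone (respectively monadic, respectively without inequality). -/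
/-- A clause of an SNP sentence with `n` universally quantified variables:
`¬(α ∧ β ∧ ε)`, given by positive and negated input atoms (`alpha`, `nalpha`),
positive and negated proof atoms (`beta`, `nbeta`) and inequalities `eps`. -/
structure SNPClause (σ : Type) (ar : σ → ℕ) (π : Type) (arP : π → ℕ) (n : ℕ) where
  alpha : List (Σ s : σ, Fin (ar s) → Fin n)
  nalpha : List (Σ s : σ, Fin (ar s) → Fin n)
  beta : List (Σ p : π, Fin (arP p) → Fin n)
  nbeta : List (Σ p : π, Fin (arP p) → Fin n)
  eps : List (Fin n × Fin n)

/-- An SNP sentence `∃Π ∀x̄ ⋀ᵢ ¬(αᵢ ∧ βᵢ ∧ εᵢ)` over input signature `σ` with existential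
(proof) signature `π`. -/
structure SNPSentence (σ : Type) (ar : σ → ℕ) (π : Type) (arP : π → ℕ) where
  nvars : ℕ
  clauses : List (SNPClause σ ar π arP nvars)

namespace SNPClause

variable {σ π : Type} {ar : σ → ℕ} {arP : π → ℕ} {n : ℕ}

/-- The conjunction `α ∧ β ∧ ε` of a clause holds in `A` under the interpretation `P` of the
proof relations and the valuation `v` of the variables. -/
def Holds (c : SNPClause σ ar π arP n) (A : RStruct σ ar)
    (P : ∀ p : π, Set (Fin (arP p) → A.carrier)) (v : Fin n → A.carrier) : Prop :=
  (∀ a ∈ c.alpha, (v ∘ a.2) ∈ A.rel a.1) ∧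
  (∀ a ∈ c.nalpha, (v ∘ a.2) ∉ A.rel a.1) ∧
  (∀ b ∈ c.beta, (v ∘ b.2) ∈ P b.1) ∧
  (∀ b ∈ c.nbeta, (v ∘ b.2) ∉ P b.1) ∧
  (∀ e ∈ c.eps, v e.1 ≠ v e.2)

/-- The variable `x` occurs in the clause `c`. -/
def occurs (c : SNPClause σ ar π arP n) (x : Fin n) : Prop :=
  (∃ a ∈ c.alpha, ∃ j, a.2 j = x) ∨ (∃ a ∈ c.nalpha, ∃ j, a.2 j = x) ∨
  (∃ b ∈ c.beta, ∃ j, b.2 j = x) ∨ (∃ b ∈ c.nbeta, ∃ j, b.2 j = x) ∨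
  (∃ e ∈ c.eps, e.1 = x ∨ e.2 = x)

end SNPClause

namespace SNPSentence

variable {σ π : Type} {ar : σ → ℕ} {arP : π → ℕ}

/-- The finite structure `A` satisfies the SNP sentence `φ`: the proof relations can be
interpreted so that no clause conjunction is realized by any valuation. -/
def Sat (φ : SNPSentence σ ar π arP) (A : RStruct σ ar) : Prop :=
  ∃ P : ∀ p : π, Set (Fin (arP p) → A.carrier),
    ∀ v : Fin φ.nvars → A.carrier, ∀ c ∈ φ.clauses, ¬ c.Holds A P v

/-- Monotone: no negated input atoms. -/
def Monotone (φ : SNPSentence σ ar π arP) : Prop := ∀ c ∈ φ.clauses, c.nalpha = []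

/-- Without inequality: no inequalities. -/
def NoIneq (φ : SNPSentence σ ar π arP) : Prop := ∀ c ∈ φ.clauses, c.eps = []

/-- Primitive: in every clause, for every proof symbol `p` and every tuple of variables
occurring in the clause, either the corresponding atom or its negation occurs in the clause. -/
def Primitive (φ : SNPSentence σ ar π arP) : Prop :=
  ∀ c ∈ φ.clauses, ∀ p : π, ∀ t : Fin (arP p) → Fin φ.nvars,
    (∀ j, c.occurs (t j)) → (⟨p, t⟩ ∈ c.beta ∨ ⟨p, t⟩ ∈ c.nbeta)

end SNPSentence

open RStruct

noncomputable section Aux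
open Classical

variable {σ π : Type} {ar : σ → ℕ} {arP : π → ℕ} {n : ℕ}

/-- The type of proof atoms all of whose variables occur in the clause `c`. -/
def OccTup (c : SNPClause σ ar π arP n) : Type :=
  {s : Σ p : π, Fin (arP p) → Fin n // ∀ j, c.occurs (s.2 j)}

instance occTupFinite [Finite π] (c : SNPClause σ ar π arP n) : Finite (OccTup c) := by
  unfold OccTup; infer_instance

/-- A list of all occurring proof atoms. -/
def allOcc [Finite π] (c : SNPClause σ ar π arP n) : List (OccTup c) :=
  (@Finset.univ _ (Fintype.ofFinite _)).toList

lemma mem_allOcc [Finite π] (c : SNPClause σ ar π arP n) (s : OccTup c) :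
    s ∈ allOcc c := by
  unfold allOcc; rw [Finset.mem_toList]; exact @Finset.mem_univ _ (Fintype.ofFinite _) s

/-- A list of all sign assignments to occurring proof atoms. -/
def allFns [Finite π] (c : SNPClause σ ar π arP n) : List (OccTup c → Bool) :=
  (@Finset.univ _ (Fintype.ofFinite _)).toList

lemma mem_allFns [Finite π] (c : SNPClause σ ar π arP n) (f : OccTup c → Bool) :
    f ∈ allFns c := by
  unfold allFns; rw [Finset.mem_toList]; exact @Finset.mem_univ _ (Fintype.ofFinite _) f

/-- Completion of a clause by a sign assignment. -/
def completeClause [Finite π] (c : SNPClause σ ar π arP n) (f : OccTup c → Bool) :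
    SNPClause σ ar π arP n where
  alpha := c.alpha
  nalpha := c.nalpha
  beta := c.beta ++ ((allOcc c).filter (fun s => f s)).map Subtype.val
  nbeta := c.nbeta ++ ((allOcc c).filter (fun s => !f s)).map Subtype.val
  eps := c.eps

lemma occurs_completeClause [Finite π] (c : SNPClause σ ar π arP n) (f : OccTup c → Bool)
    (x : Fin n) : (completeClause c f).occurs x ↔ c.occurs x := by
  constructor
  · rintro (h | h | h | h | h)
    · exact Or.inl h
    · exact Or.inr (Or.inl h)
    · obtain ⟨b, hb, j, hj⟩ := h
      rcases List.mem_append.1 hb with hb | hb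
      · exact Or.inr (Or.inr (Or.inl ⟨b, hb, j, hj⟩))
      · obtain ⟨s, hs, rfl⟩ := List.mem_map.1 hb
        exact hj ▸ s.2 j
    · obtain ⟨b, hb, j, hj⟩ := h
      rcases List.mem_append.1 hb with hb | hb
      · exact Or.inr (Or.inr (Or.inr (Or.inl ⟨b, hb, j, hj⟩)))
      · obtain ⟨s, hs, rfl⟩ := List.mem_map.1 hb
        exact hj ▸ s.2 j
    · exact Or.inr (Or.inr (Or.inr (Or.inr h)))
  · rintro (h | h | h | h | h)
    · exact Or.inl h
    · exact Or.inr (Or.inl h)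
    · obtain ⟨b, hb, j, hj⟩ := h
      exact Or.inr (Or.inr (Or.inl ⟨b, List.mem_append.2 (Or.inl hb), j, hj⟩))
    · obtain ⟨b, hb, j, hj⟩ := h
      exact Or.inr (Or.inr (Or.inr (Or.inl ⟨b, List.mem_append.2 (Or.inl hb), j, hj⟩)))
    · exact Or.inr (Or.inr (Or.inr (Or.inr h)))

lemma holds_of_complete [Finite π] (c : SNPClause σ ar π arP n) (f : OccTup c → Bool)
    {A : RStruct σ ar} {P : ∀ p : π, Set (Fin (arP p) → A.carrier)}
    {v : Fin n → A.carrier} (h : (completeClause c f).Holds A P v) : c.Holds A P v := by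
  obtain ⟨h1, h2, h3, h4, h5⟩ := h
  exact ⟨h1, h2, fun b hb => h3 b (List.mem_append.2 (Or.inl hb)),
    fun b hb => h4 b (List.mem_append.2 (Or.inl hb)), h5⟩

lemma exists_complete_holds [Finite π] (c : SNPClause σ ar π arP n)
    {A : RStruct σ ar} {P : ∀ p : π, Set (Fin (arP p) → A.carrier)}
    {v : Fin n → A.carrier} (h : c.Holds A P v) :
    ∃ f : OccTup c → Bool, (completeClause c f).Holds A P v := by
  refine ⟨fun s => decide ((v ∘ s.1.2) ∈ P s.1.1), ?_⟩
  obtain ⟨h1, h2, h3, h4, h5⟩ := h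
  refine ⟨h1, h2, ?_, ?_, h5⟩
  · intro b hb
    rcases List.mem_append.1 hb with hb | hb
    · exact h3 b hb
    · obtain ⟨s, hs, rfl⟩ := List.mem_map.1 hb
      have := (List.mem_filter.1 hs).2
      exact of_decide_eq_true this
  · intro b hb
    rcases List.mem_append.1 hb with hb | hb
    · exact h4 b hb
    · obtain ⟨s, hs, rfl⟩ := List.mem_map.1 hb
      have := (List.mem_filter.1 hs).2
      simp only [Bool.not_eq_true'] at this
      exact of_decide_eq_false this

end Aux

/-- every SNP sentence is equivalent (over all finite input structures) to a
primitive SNP sentence over the same input and existential signatures; the transformation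
preserves monotonicity and the absence of inequalities.  (Since the existential signature
`π` with its arities `arP` is unchanged, being monadic is preserved automatically.) -/
theorem snp_primitive_normal_form {σ π : Type} {ar : σ → ℕ} {arP : π → ℕ}
    [Finite σ] [Finite π]
    (φ : SNPSentence σ ar π arP) :
    ∃ ψ : SNPSentence σ ar π arP,
      ψ.Primitive ∧
      (∀ A : RStruct σ ar, φ.Sat A ↔ ψ.Sat A) ∧
      (φ.Monotone → ψ.Monotone) ∧
      (φ.NoIneq → ψ.NoIneq) := by
  classical
  refine ⟨⟨φ.nvars, φ.clauses.flatMap (fun c => (allFns c).map (completeClause c))⟩,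
    ?_, ?_, ?_, ?_⟩
  · -- Primitive
    intro c' hc' p t ht
    simp only [List.mem_flatMap, List.mem_map] at hc'
    obtain ⟨c, hc, f, hf, rfl⟩ := hc'
    have ht' : ∀ j, c.occurs (t j) := fun j => (occurs_completeClause c f (t j)).1 (ht j)
    set s : OccTup c := ⟨⟨p, t⟩, ht'⟩ with hs
    by_cases hfs : f s
    · left
      apply List.mem_append.2 (Or.inr _)
      exact List.mem_map.2 ⟨s, List.mem_filter.2 ⟨mem_allOcc c s, by simp [hfs]⟩, rfl⟩
    · right
      apply List.mem_append.2 (Or.inr _)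
      exact List.mem_map.2 ⟨s, List.mem_filter.2 ⟨mem_allOcc c s, by simp [hfs]⟩, rfl⟩
  · -- Equivalence
    intro A
    constructor
    · rintro ⟨P, hP⟩
      refine ⟨P, fun v c' hc' hh => ?_⟩
      simp only [List.mem_flatMap, List.mem_map] at hc'
      obtain ⟨c, hc, f, hf, rfl⟩ := hc'
      exact hP v c hc (holds_of_complete c f hh)
    · rintro ⟨P, hP⟩
      refine ⟨P, fun v c hc hh => ?_⟩
      obtain ⟨f, hf⟩ := exists_complete_holds c hh
      exact hP v (completeClause c f)
        (List.mem_flatMap.2 ⟨c, hc, List.mem_map.2 ⟨f, mem_allFns c f, rfl⟩⟩) hf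
  · -- Monotone
    intro hm c' hc'
    simp only [List.mem_flatMap, List.mem_map] at hc'
    obtain ⟨c, hc, f, hf, rfl⟩ := hc'
    exact hm c hc
  · -- NoIneq
    intro hm c' hc'
    simp only [List.mem_flatMap, List.mem_map] at hc'
    obtain ⟨c, hc, f, hf, rfl⟩ := hc'
    exact hm c hc
end

section
/- Let L be a class of finite Δ-structures definable by a monotone monadic SNP sentence (inequalities allowed). Then there exist a monadic signature Δ' disjoint from Δ and a finite set F' of structures in Rel^cov(Δ,Δ') such that L = Φ(Forb_inj(F')): a finite Δ-structure A satisfies the sentence if and only if A has a lift A' ∈ Rel^cov(Δ,Δ') admitting no injective homomorphism from any member of F'. -/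
namespace RStruct

/-- There exists an injective homomorphism `A → B`. -/
def HomInj {σ : Type} {ar : σ → ℕ} (A B : RStruct σ ar) : Prop :=
  ∃ f, IsHom A B f ∧ Function.Injective f

end RStruct

open RStruct

/-! Monadic proof predicates are the same thing as a colouring of the elements by sets of
predicates, so the lift signature is `Set π`. An interpretation gives the lift in which every
element carries exactly its colour; conversely, choosing one colour per element of a covering
lift gives an interpretation. A valuation `v` of a clause factors as `f ∘ q` with `f` injective
and `q : Fin n → Fin m`, `m ≤ n`; it violates the clause exactly when `f` is an injective
homomorphism from the coloured image of the clause's input atoms under `q`. These images, over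
all clauses and all `q` and colourings meeting the clause's proof atoms and inequalities, are the
finitely many forbidden lifts. Monotonicity is needed to read off a violated clause from such a
homomorphism, which only transports positive input atoms. -/

theorem exists_fin_factorization_injective {X : Type*} {n : ℕ} (v : Fin n → X) :
    ∃ m ≤ n, ∃ (q : Fin n → Fin m) (f : Fin m → X), Function.Injective f ∧ f ∘ q = v := by
  let e := Finite.equivFin (Set.range v)
  refine ⟨_, ?_, e ∘ Set.rangeFactorization v, Subtype.val ∘ e.symm,
    Subtype.val_injective.comp e.symm.injective, ?_⟩
  · simpa using Finite.card_range_le v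
  · funext i
    exact congrArg Subtype.val (e.symm_apply_apply _)

namespace RStruct

variable {σ π : Type} {ar : σ → ℕ}

theorem IsHom.comp {A B C : RStruct σ ar} {f : A.carrier → B.carrier}
    {g : B.carrier → C.carrier} (hg : IsHom B C g) (hf : IsHom A B f) : IsHom A C (g ∘ f) :=
  fun s t ht => hg s (f ∘ t) (hf s t ht)

theorem HomInj.trans {A B C : RStruct σ ar} (hAB : HomInj A B) (hBC : HomInj B C) :
    HomInj A C :=
  let ⟨f, hf, hf_inj⟩ := hAB
  let ⟨g, hg, hg_inj⟩ := hBC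
  ⟨g ∘ f, hg.comp hf, hg_inj.comp hf_inj⟩

def colorLift (A : RStruct σ ar) (χ : A.carrier → Set π) :
    RStruct (σ ⊕ Set π) (Sum.elim ar fun _ => 1) where
  carrier := A.carrier
  fin := A.fin
  rel
    | .inl s => A.rel s
    | .inr S => {t : Fin 1 → A.carrier | χ (t 0) = S}

theorem covers_colorLift (A : RStruct σ ar) (χ : A.carrier → Set π) :
    Covers 1 (colorLift A χ) :=
  fun t => ⟨χ (t 0), rfl⟩

theorem isHom_colorLift_iff {A B : RStruct σ ar} {χ : A.carrier → Set π}
    {ψ : B.carrier → Set π} {f : A.carrier → B.carrier} :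
    IsHom (colorLift A χ) (colorLift B ψ) f ↔ IsHom A B f ∧ ∀ x, ψ (f x) = χ x := by
  refine ⟨fun h => ⟨fun s => h (.inl s), fun x => h (.inr (χ x)) (fun _ => x) rfl⟩, ?_⟩
  rintro ⟨hf, hψ⟩ (s | S) t ht
  · exact hf s t ht
  · exact (hψ _).trans ht

theorem isHom_colorLift_shadow {A' : RStruct (σ ⊕ Set π) (Sum.elim ar fun _ => 1)}
    {χ : A'.carrier → Set π} (hχ : ∀ x, (fun _ : Fin 1 => x) ∈ A'.rel (.inr (χ x))) :
    IsHom (colorLift (shadow A') χ) A' id := by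
  rintro (s | S) t ht
  · exact ht
  · have h := hχ (t (0 : Fin 1))
    rw [ht] at h
    have h_const : id ∘ t = fun _ => t (0 : Fin 1) :=
      funext fun j => congrArg t (Subsingleton.elim (α := Fin 1) j 0)
    exact (congrArg (· ∈ A'.rel (.inr S)) h_const).mpr h

end RStruct

namespace SNPSentence

variable {σ π : Type} {ar : σ → ℕ} {arP : π → ℕ}

def colorOf {X : Type} (P : ∀ p : π, Set (Fin (arP p) → X)) (x : X) : Set π :=
  {p | (fun _ => x) ∈ P p}

def ofColoring {X : Type} (χ : X → Set π) (p : π) : Set (Fin (arP p) → X) :=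
  {t | ∀ j, p ∈ χ (t j)}

theorem ofColoring_colorOf {X : Type} (hm : ∀ p : π, arP p = 1)
    (P : ∀ p : π, Set (Fin (arP p) → X)) : ofColoring (colorOf P) = P := by
  funext p
  ext t
  have : Unique (Fin (arP p)) := hm p ▸ inferInstance
  have h_const : t = fun _ => t default := funext fun j => congrArg t (Unique.eq_default j)
  change (∀ j, (fun _ => t j) ∈ P p) ↔ t ∈ P p
  rw [Unique.forall_iff, ← h_const]

theorem sat_iff_exists_coloring (hm : ∀ p : π, arP p = 1) (φ : SNPSentence σ ar π arP)
    (A : RStruct σ ar) :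
    φ.Sat A ↔ ∃ χ : A.carrier → Set π, ∀ v, ∀ c ∈ φ.clauses, ¬ c.Holds A (ofColoring χ) v :=
  ⟨fun ⟨P, hP⟩ => ⟨colorOf P, by rwa [ofColoring_colorOf hm]⟩, fun ⟨χ, hχ⟩ => ⟨_, hχ⟩⟩

end SNPSentence

namespace SNPClause

open SNPSentence

variable {σ π : Type} {ar : σ → ℕ} {arP : π → ℕ} {n : ℕ}

def alphaImage (c : SNPClause σ ar π arP n) {m : ℕ} (q : Fin n → Fin m) : RStruct σ ar :=
  ⟨Fin m, inferInstance, fun s => (q ∘ ·) '' {t | ⟨s, t⟩ ∈ c.alpha}⟩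

theorem isHom_alphaImage_iff {c : SNPClause σ ar π arP n} {A : RStruct σ ar} {m : ℕ}
    {q : Fin n → Fin m} {f : Fin m → A.carrier} :
    IsHom (c.alphaImage q) A f ↔ ∀ a ∈ c.alpha, (f ∘ q) ∘ a.2 ∈ A.rel a.1 := by
  refine ⟨fun h a ha => h a.1 (q ∘ a.2) ⟨a.2, ha, rfl⟩, ?_⟩
  rintro h s _ ⟨t, ht, rfl⟩
  exact h ⟨s, t⟩ ht

def obstructions (c : SNPClause σ ar π arP n) :
    Set (RStruct (σ ⊕ Set π) (Sum.elim ar fun _ => 1)) :=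
  {F | ∃ m ≤ n, ∃ (q : Fin n → Fin m) (χ : Fin m → Set π),
    (∀ b ∈ c.beta, q ∘ b.2 ∈ ofColoring χ b.1) ∧ (∀ b ∈ c.nbeta, q ∘ b.2 ∉ ofColoring χ b.1) ∧
    (∀ e ∈ c.eps, q e.1 ≠ q e.2) ∧ F = colorLift (c.alphaImage q) χ}

theorem obstructions_finite [Finite π] (c : SNPClause σ ar π arP n) :
    c.obstructions.Finite := by
  refine ((Set.finite_le_nat n).biUnion fun m _ => Set.finite_range
    fun x : (Fin n → Fin m) × (Fin m → Set π) => colorLift (c.alphaImage x.1) x.2).subset ?_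
  rintro F ⟨m, hm, q, χ, -, -, -, rfl⟩
  exact Set.mem_biUnion hm ⟨(q, χ), rfl⟩

theorem exists_holds_iff_exists_homInj_obstruction {c : SNPClause σ ar π arP n}
    (hc : c.nalpha = []) {A : RStruct σ ar} {χ : A.carrier → Set π} :
    (∃ v, c.Holds A (ofColoring χ) v) ↔ ∃ F ∈ c.obstructions, HomInj F (colorLift A χ) := by
  constructor
  · rintro ⟨v, hα, -, hβ, hnβ, hsep⟩
    obtain ⟨m, hm, q, f, hf, rfl⟩ := exists_fin_factorization_injective v
    have hsep' : ∀ e ∈ c.eps, q e.1 ≠ q e.2 := fun e he h => hsep e he (congrArg f h)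
    refine ⟨_, ⟨m, hm, q, χ ∘ f, hβ, hnβ, hsep', rfl⟩, f, ?_, hf⟩
    exact isHom_colorLift_iff.2 ⟨isHom_alphaImage_iff.2 hα, fun _ => rfl⟩
  · rintro ⟨_, ⟨m, -, q, ψ, hβ, hnβ, hsep, rfl⟩, f, hhom, hf⟩
    obtain ⟨hα, hψ⟩ := isHom_colorLift_iff.1 hhom
    rw [← show χ ∘ f = ψ from funext hψ] at hβ hnβ
    exact ⟨f ∘ q, isHom_alphaImage_iff.1 hα, by simp [hc], hβ, hnβ,
      fun e he h => hsep e he (hf h)⟩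

end SNPClause

open SNPClause

theorem monotone_monadic_snp_as_forbidden_inj_lifts_general {σ π : Type} {ar : σ → ℕ} {arP : π → ℕ}
    [Finite π]
    (φ : SNPSentence σ ar π arP) (hmono : φ.Monotone) (hmonadic : ∀ p : π, arP p = 1) :
    ∃ (σ' : Type) (_ : Finite σ')
      (F' : Set (RStruct (σ ⊕ σ') (Sum.elim ar fun _ => 1))),
      F'.Finite ∧ (∀ F0 ∈ F', Covers 1 F0) ∧
      ∀ A : RStruct σ ar,
        φ.Sat A ↔ ∃ A' : RStruct (σ ⊕ σ') (Sum.elim ar fun _ => 1),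
          Covers 1 A' ∧ shadow A' = A ∧ ∀ F0 ∈ F', ¬ HomInj F0 A' := by
  refine ⟨Set π, inferInstance, ⋃ c ∈ {c | c ∈ φ.clauses}, c.obstructions,
    (List.finite_toSet _).biUnion fun c _ => c.obstructions_finite, ?_, fun A => ?_⟩
  · simp only [Set.mem_iUnion₂]
    rintro _ ⟨c, -, m, -, q, χ, -, -, -, rfl⟩
    exact covers_colorLift _ _
  rw [φ.sat_iff_exists_coloring hmonadic]
  constructor
  · rintro ⟨χ, hχ⟩
    refine ⟨colorLift A χ, covers_colorLift A χ, rfl, fun F hF hFA => ?_⟩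
    obtain ⟨c, hc, hF⟩ := Set.mem_iUnion₂.1 hF
    obtain ⟨v, hv⟩ := (exists_holds_iff_exists_homInj_obstruction (hmono c hc)).2 ⟨F, hF, hFA⟩
    exact hχ v c hc hv
  · rintro ⟨A', hcov, rfl, hforb⟩
    choose χ hχ using fun x => hcov fun _ => x
    refine ⟨χ, fun v c hc hv => ?_⟩
    obtain ⟨F, hF, hFA⟩ := (exists_holds_iff_exists_homInj_obstruction (hmono c hc)).1 ⟨v, hv⟩
    exact hforb F (Set.mem_iUnion₂.2 ⟨c, hc, hF⟩)
      (hFA.trans ⟨id, isHom_colorLift_shadow hχ, Function.injective_id⟩)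

/-- every class of finite `Δ`-structures defined by a monotone monadic SNP
sentence (inequalities allowed) equals `Φ(Forb_inj F')` for a monadic lift signature `σ'`
and a finite set `F'` of covering lifted structures, where forbidding is via injective
homomorphisms. -/
theorem monotone_monadic_snp_as_forbidden_inj_lifts {σ π : Type} {ar : σ → ℕ} {arP : π → ℕ}
    [Finite σ] [Finite π]
    (φ : SNPSentence σ ar π arP) (hmono : φ.Monotone) (hmonadic : ∀ p : π, arP p = 1) :
    ∃ (σ' : Type) (_ : Finite σ')
      (F' : Set (RStruct (σ ⊕ σ') (Sum.elim ar fun _ => 1))),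
      F'.Finite ∧ (∀ F0 ∈ F', Covers 1 F0) ∧
      ∀ A : RStruct σ ar,
        φ.Sat A ↔ ∃ A' : RStruct (σ ⊕ σ') (Sum.elim ar fun _ => 1),
          Covers 1 A' ∧ shadow A' = A ∧ ∀ F0 ∈ F', ¬ HomInj F0 A' :=
  monotone_monadic_snp_as_forbidden_inj_lifts_general φ hmono hmonadic
end

section
/- Let L be a class of finite Δ-structures definable by a monadic SNP sentence without inequality (negated input atoms allowed). Then there exist a monadic signature Δ' disjoint from Δ and a finite set F' of structures in Rel^cov(Δ,Δ') such that L = Φ(Forb_full(F')): a finite Δ-structure A satisfies the sentence if and only if A has a lift A' ∈ Rel^cov(Δ,Δ') admitting no full homomorphism from any member of F'. -/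
namespace RStruct

/-- `f` is a full homomorphism from `A` to `B`: it preserves relations and non-relations. -/
def IsFullHom {σ : Type} {ar : σ → ℕ} (A B : RStruct σ ar) (f : A.carrier → B.carrier) : Prop :=
  ∀ s : σ, ∀ t : Fin (ar s) → A.carrier, t ∈ A.rel s ↔ (f ∘ t) ∈ B.rel s

/-- There exists a full homomorphism `A → B`. -/
def HomFull {σ : Type} {ar : σ → ℕ} (A B : RStruct σ ar) : Prop :=
  ∃ f, IsFullHom A B f

end RStruct

open RStruct

/-!
Color each element by the set of proof predicates it satisfies, so the lift signature is `Set π`.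
Forbidding the one-point structures carrying two colors forces every covering lift to color each
element by exactly one color `χ a`, which recovers a monadic interpretation. A clause realized
under a valuation `v` pulls back along `v` to a colored structure on the variables of the sentence
that maps fully into the lift via `v`; conversely, since there are no inequalities, a full
homomorphism from such a structure pushes the realized clause forward. So forbidding these
finitely many clause witnesses captures the sentence exactly.
-/

namespace RStruct

variable {σ σ' : Type} {ar : σ → ℕ}

def comap (A : RStruct σ ar) {X : Type} [Finite X] (v : X → A.carrier) : RStruct σ ar :=
  ⟨X, inferInstance, fun s => {t | v ∘ t ∈ A.rel s}⟩

theorem isFullHom_comap (A : RStruct σ ar) {X : Type} [Finite X] (v : X → A.carrier) :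
    IsFullHom (A.comap v) A v :=
  fun _ _ => Iff.rfl

def colors (A' : RStruct (σ ⊕ σ') (Sum.elim ar fun _ => 1)) (a : A'.carrier) : Set σ' :=
  {S | (fun _ => a) ∈ A'.rel (.inr S)}

def withColors (B : RStruct σ ar) (col : B.carrier → Set σ') :
    RStruct (σ ⊕ σ') (Sum.elim ar fun _ => 1) where
  carrier := B.carrier
  fin := B.fin
  rel
    | .inl s => B.rel s
    | .inr S => {t : Fin 1 → B.carrier | S ∈ col (t 0)}

theorem shadow_withColors (B : RStruct σ ar) (col : B.carrier → Set σ') :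
    shadow (withColors B col) = B :=
  rfl

theorem covers_withColors {B : RStruct σ ar} {col : B.carrier → Set σ'}
    (h : ∀ x, (col x).Nonempty) : Covers 1 (withColors B col) :=
  fun t => let ⟨S, hS⟩ := h (t 0); ⟨S, hS⟩

theorem isFullHom_withColors_iff {B : RStruct σ ar} {col : B.carrier → Set σ'}
    {A' : RStruct (σ ⊕ σ') (Sum.elim ar fun _ => 1)} {f : B.carrier → A'.carrier} :
    IsFullHom (withColors B col) A' f ↔
      IsFullHom B (shadow A') f ∧ ∀ x, col x = colors A' (f x) := by
  refine ⟨fun h => ⟨fun s => h (.inl s), fun x => Set.ext fun S => h (.inr S) fun _ => x⟩, ?_⟩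
  rintro ⟨hB, hcol⟩ (s | S) t
  · exact hB s t
  · change Fin 1 → B.carrier at t
    have ht : f ∘ t = fun _ => f (t 0) := funext fun i => by rw [Subsingleton.elim i 0]; rfl
    change S ∈ col (t 0) ↔ f ∘ t ∈ A'.rel (.inr S)
    rw [hcol, ht]
    rfl

def multicoloredPoints (σ' : Type) : Set (RStruct (σ ⊕ σ') (Sum.elim ar fun _ => 1)) :=
  {F | ∃ (U : ∀ s, Set (Fin (ar s) → Unit)) (C : Set σ'),
    C.Nontrivial ∧ F = withColors ⟨Unit, inferInstance, U⟩ fun _ => C}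

theorem finite_multicoloredPoints [Finite σ] [Finite σ'] :
    (multicoloredPoints (ar := ar) σ').Finite :=
  (Set.finite_range fun UC : (∀ s, Set (Fin (ar s) → Unit)) × Set σ' =>
    withColors ⟨Unit, inferInstance, UC.1⟩ fun _ => UC.2).subset
    fun _ ⟨U, C, _, hF⟩ => ⟨(U, C), hF.symm⟩

theorem exists_homFull_multicoloredPoints_iff {A' : RStruct (σ ⊕ σ') (Sum.elim ar fun _ => 1)} :
    (∃ F ∈ multicoloredPoints σ', HomFull F A') ↔ ∃ a, (colors A' a).Nontrivial := by
  constructor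
  · rintro ⟨_, ⟨U, C, hC, rfl⟩, f, hf⟩
    exact ⟨f (), (isFullHom_withColors_iff.1 hf).2 () ▸ hC⟩
  · rintro ⟨a, ha⟩
    exact ⟨_, ⟨_, _, ha, rfl⟩, fun _ => a,
      isFullHom_withColors_iff.2 ⟨isFullHom_comap (shadow A') fun _ : Unit => a, fun _ => rfl⟩⟩

end RStruct

namespace SNPClause

variable {σ π : Type} {ar : σ → ℕ} {arP : π → ℕ} {n : ℕ}

-- `c.eps = []` is needed because a full homomorphism `f` need not be injective.
theorem holds_comap_iff (c : SNPClause σ ar π arP n) (hc : c.eps = []) {B A : RStruct σ ar}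
    {f : B.carrier → A.carrier} (hf : IsFullHom B A f) (P : ∀ p : π, Set (Fin (arP p) → A.carrier))
    (w : Fin n → B.carrier) :
    c.Holds B (fun p => {t | f ∘ t ∈ P p}) w ↔ c.Holds A P (f ∘ w) := by
  have hrel : ∀ a : Σ s : σ, Fin (ar s) → Fin n,
      w ∘ a.2 ∈ B.rel a.1 ↔ (f ∘ w) ∘ a.2 ∈ A.rel a.1 := fun a => hf a.1 _
  simp only [Holds, hc, hrel, List.not_mem_nil, IsEmpty.forall_iff, implies_true, and_true]
  rfl

end SNPClause

namespace SNPSentence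

variable {σ π : Type} {ar : σ → ℕ} {arP : π → ℕ}

def monadicInterp {X : Type} (χ : X → Set π) (p : π) : Set (Fin (arP p) → X) :=
  {t | ∀ i, p ∈ χ (t i)}

theorem exists_monadicInterp_eq (hmonadic : ∀ p : π, arP p = 1) {X : Type}
    (P : ∀ p : π, Set (Fin (arP p) → X)) : ∃ χ : X → Set π, monadicInterp χ = P := by
  refine ⟨fun x p => (fun _ => x) ∈ P p, funext fun p => Set.ext fun t => ?_⟩
  have hsub : Subsingleton (Fin (arP p)) := by rw [hmonadic p]; infer_instance
  have i₀ : Fin (arP p) := ⟨0, by rw [hmonadic p]; exact Nat.one_pos⟩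
  have ht : ∀ i, t = fun _ => t i := fun i => funext fun j => congrArg t (Subsingleton.elim j i)
  exact ⟨fun h => ht i₀ ▸ h i₀, fun h i => ht i ▸ h⟩

def clauseWitnesses (φ : SNPSentence σ ar π arP) :
    Set (RStruct (σ ⊕ Set π) (Sum.elim ar fun _ => 1)) :=
  {F | ∃ (ρ : ∀ s, Set (Fin (ar s) → Fin φ.nvars)) (χ : Fin φ.nvars → Set π),
    (∃ c ∈ φ.clauses, c.Holds ⟨_, inferInstance, ρ⟩ (monadicInterp χ) id) ∧
    F = withColors ⟨_, inferInstance, ρ⟩ fun x => {χ x}}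

theorem finite_clauseWitnesses [Finite σ] [Finite π] (φ : SNPSentence σ ar π arP) :
    φ.clauseWitnesses.Finite :=
  (Set.finite_range fun ρχ : (∀ s, Set (Fin (ar s) → Fin φ.nvars)) × (Fin φ.nvars → Set π) =>
    withColors ⟨_, inferInstance, ρχ.1⟩ fun x => {ρχ.2 x}).subset
    fun _ ⟨ρ, χ, _, hF⟩ => ⟨(ρ, χ), hF.symm⟩

theorem exists_holds_iff_exists_homFull_clauseWitness {φ : SNPSentence σ ar π arP}
    (hnoineq : φ.NoIneq) {A' : RStruct (σ ⊕ Set π) (Sum.elim ar fun _ => 1)}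
    {χ : A'.carrier → Set π} (hχ : ∀ a, colors A' a = {χ a}) :
    (∃ v, ∃ c ∈ φ.clauses, c.Holds (shadow A') (monadicInterp χ) v) ↔
      ∃ F ∈ φ.clauseWitnesses, HomFull F A' := by
  constructor
  · rintro ⟨v, c, hc, hv⟩
    have hcomap := isFullHom_comap (shadow A') v
    refine ⟨_, ⟨_, χ ∘ v, ⟨c, hc, (c.holds_comap_iff (hnoineq c hc) hcomap _ id).2 hv⟩, rfl⟩,
      v, isFullHom_withColors_iff.2 ⟨hcomap, fun x => (hχ (v x)).symm⟩⟩
  · rintro ⟨_, ⟨ρ, χ₀, ⟨c, hc, hw⟩, rfl⟩, f, hf⟩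
    obtain ⟨hfull, hcol⟩ := isFullHom_withColors_iff.1 hf
    have hχ₀ : χ₀ = χ ∘ f := funext fun x => Set.singleton_injective ((hcol x).trans (hχ (f x)))
    rw [hχ₀] at hw
    exact ⟨f, c, hc, (c.holds_comap_iff (hnoineq c hc) hfull _ id).1 hw⟩

end SNPSentence

open SNPSentence

/-- every class of finite `Δ`-structures defined by a monadic SNP sentence
without inequality (negated input atoms allowed) equals `Φ(Forb_full F')` for a monadic lift
signature `σ'` and a finite set `F'` of covering lifted structures, where forbidding is via
full homomorphisms. -/
theorem monadic_noineq_snp_as_forbidden_full_lifts {σ π : Type} {ar : σ → ℕ} {arP : π → ℕ}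
    [Finite σ] [Finite π]
    (φ : SNPSentence σ ar π arP) (hmonadic : ∀ p : π, arP p = 1) (hnoineq : φ.NoIneq) :
    ∃ (σ' : Type) (_ : Finite σ')
      (F' : Set (RStruct (σ ⊕ σ') (Sum.elim ar fun _ => 1))),
      F'.Finite ∧ (∀ F0 ∈ F', Covers 1 F0) ∧
      ∀ A : RStruct σ ar,
        φ.Sat A ↔ ∃ A' : RStruct (σ ⊕ σ') (Sum.elim ar fun _ => 1),
          Covers 1 A' ∧ shadow A' = A ∧ ∀ F0 ∈ F', ¬ HomFull F0 A' := by
  refine ⟨Set π, inferInstance, multicoloredPoints _ ∪ φ.clauseWitnesses,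
    finite_multicoloredPoints.union φ.finite_clauseWitnesses, ?_, fun A => ⟨?_, ?_⟩⟩
  · rintro _ (⟨U, C, hC, rfl⟩ | ⟨ρ, χ, -, rfl⟩)
    exacts [covers_withColors fun _ => hC.nonempty,
      covers_withColors fun _ => Set.singleton_nonempty _]
  · rintro ⟨P, hP⟩
    obtain ⟨χ, rfl⟩ := exists_monadicInterp_eq hmonadic P
    refine ⟨withColors A fun a => {χ a}, covers_withColors fun _ => Set.singleton_nonempty _,
      shadow_withColors _ _, ?_⟩
    rintro F (hF | hF) hFA
    · obtain ⟨a, ha⟩ := exists_homFull_multicoloredPoints_iff.1 ⟨F, hF, hFA⟩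
      exact Set.not_nontrivial_singleton ha
    · obtain ⟨v, c, hc, hv⟩ :=
        (exists_holds_iff_exists_homFull_clauseWitness hnoineq fun _ => rfl).2 ⟨F, hF, hFA⟩
      exact hP v c hc hv
  · rintro ⟨A', hcov, rfl, hfree⟩
    have hsub : ∀ a, (colors A' a).Subsingleton := fun a => Set.not_nontrivial_iff.1 fun h =>
      let ⟨F, hF, hFA⟩ := exists_homFull_multicoloredPoints_iff.2 ⟨a, h⟩
      hfree F (.inl hF) hFA
    choose χ hχ using fun a =>
      Set.exists_eq_singleton_iff_nonempty_subsingleton.2 ⟨hcov fun _ => a, hsub a⟩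
    refine ⟨monadicInterp χ, fun v c hc hv => ?_⟩
    obtain ⟨F, hF, hFA⟩ :=
      (exists_holds_iff_exists_homFull_clauseWitness hnoineq hχ).1 ⟨v, c, hc, hv⟩
    exact hfree F (.inr hF) hFA
end

section
/- The class of finite triangle-free graphs is not a finite union of CSP languages: there is no finite set D of finite graphs such that a finite graph G is triangle-free if and only if G admits a homomorphism to some member of D. -/
/-!
Triangle-free graphs have unbounded chromatic number, so no finite family of finite graphs can
receive homomorphisms from all of them. The witnesses are the shift graphs on `{0, …, m - 1}`:
vertices are pairs `x < y`, and `(x, y)` is adjacent to `(y, z)`. A homomorphism `f` from the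
shift graph into `H` assigns to each `x` the set of colours `{f (x, y) | x < y}`; if `x < y` had
the same set, then `f (x, y) = f (y, z)` for some `z`, contradicting the edge between `(x, y)`
and `(y, z)`. So the colour sets are pairwise distinct, and `m ≤ 2 ^ |V(H)|`.
-/

open SimpleGraph

def shiftGraph (α : Type*) [Preorder α] : SimpleGraph {p : α × α // p.1 < p.2} where
  Adj p q := p.1.2 = q.1.1 ∨ q.1.2 = p.1.1
  symm := ⟨fun _ _ h => h.symm⟩
  loopless := ⟨fun p h => h.elim (fun e => p.2.ne' e) (fun e => p.2.ne' e)⟩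

namespace shiftGraph

variable {α : Type*}

lemma cliqueFree_three [Preorder α] : (shiftGraph α).CliqueFree 3 := by
  classical
  intro s hs
  obtain ⟨⟨⟨a₁, a₂⟩, ha⟩, ⟨⟨b₁, b₂⟩, hb⟩, ⟨⟨c₁, c₂⟩, hc⟩, hab, hac, hbc, -⟩ :=
    is3Clique_iff.mp hs
  simp only [shiftGraph] at ha hb hc hab hac hbc
  rcases hab with rfl | rfl <;> rcases hbc with rfl | rfl <;> rcases hac with h | h <;>
    subst h <;> order

variable {V : Type*} {H : SimpleGraph V}

def outColours [Preorder α] (f : shiftGraph α →g H) (x : α) : Set V :=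
  {v | ∃ y, ∃ h : x < y, f ⟨(x, y), h⟩ = v}

lemma outColours_injective [LinearOrder α] (f : shiftGraph α →g H) :
    Function.Injective (outColours f) := by
  suffices ∀ x y, x < y → outColours f x ≠ outColours f y by
    intro x y hxy
    by_contra hne
    rcases lt_or_gt_of_ne hne with hlt | hlt
    exacts [this x y hlt hxy, this y x hlt hxy.symm]
  intro x y hxy hS
  obtain ⟨z, hyz, hfz⟩ : f ⟨(x, y), hxy⟩ ∈ outColours f y := hS ▸ ⟨y, hxy, rfl⟩
  have hadj : (shiftGraph α).Adj ⟨(x, y), hxy⟩ ⟨(y, z), hyz⟩ := Or.inl rfl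
  exact H.ne_of_adj (f.map_adj hadj) hfz.symm

lemma card_le_two_pow_of_hom [LinearOrder α] [Fintype α] [Fintype V]
    (f : shiftGraph α →g H) : Fintype.card α ≤ 2 ^ Fintype.card V :=
  Fintype.card_set (α := V) ▸ Fintype.card_le_of_injective _ (outColours_injective f)

end shiftGraph

/-- the class of finite triangle-free graphs is not a finite union of CSP
languages: there is no finite family `H i` of finite graphs such that a finite graph `G` is
triangle-free iff `G` admits a (graph) homomorphism to some `H i`. -/
theorem triangle_free_not_finite_union_of_csp :
    ¬ ∃ (ι : Type) (_ : Finite ι) (V : ι → Type) (_ : ∀ i, Finite (V i))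
        (H : ∀ i : ι, SimpleGraph (V i)),
      ∀ (W : Type) (_ : Finite W) (G : SimpleGraph W),
        G.CliqueFree 3 ↔ ∃ i : ι, Nonempty (G →g H i) := by
  rintro ⟨ι, _, V, _, H, hcsp⟩
  obtain ⟨N, hN⟩ := (Set.finite_range fun i => 2 ^ Nat.card (V i)).bddAbove
  obtain ⟨i, ⟨f⟩⟩ :=
    (hcsp _ inferInstance (shiftGraph (Fin (N + 1)))).mp shiftGraph.cliqueFree_three
  have : Fintype (V i) := Fintype.ofFinite _
  have hcard := shiftGraph.card_le_two_pow_of_hom f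
  have hbound : 2 ^ Nat.card (V i) ≤ N := hN ⟨i, rfl⟩
  rw [Fintype.card_fin, ← Nat.card_eq_fintype_card] at hcard
  omega
end
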